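/- arXiv:0805.1430 — 6 statements merged into one kernel-verified Lean document; each statement's English description precedes it below -/
import Mathlib

section
/- If v₁, v₂ are nonzero vectors in a real inner product space H and u ∈ H is nonzero, then |sin(v₁,v₂)| ≤ |sin(v₁,u)| + |sin(u,v₂)|, where |sin(x,y)| denotes the sine of the angle between nonzero vectors x and y, i.e. |sin(x,y)| = sqrt(1 − (⟨x,y⟩/(‖x‖·‖y‖))²). -/
/-!
For unit vectors `x` and `u`, `absSin x u` is the distance `‖x - ⟪x, u⟫ • u‖` from `x` to the
line `ℝ u`, and `absSin x z ≤ ‖x - c • z‖` for every `c`. Given unit vectors `x, z, u` with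
`|⟪x, u⟫| ≤ |⟪z, u⟫|`, take `c = ⟪x, u⟫ / ⟪z, u⟫`, so `|c| ≤ 1` and
`x - c • z = (x - ⟪x, u⟫ • u) - c • (z - ⟪z, u⟫ • u)`; the triangle inequality for the norm
then gives `absSin x z ≤ absSin x u + absSin u z`. Rescaling reduces the general case to unit
vectors.
-/

open scoped RealInnerProductSpace

/-- The absolute value of the sine of the angle between two nonzero vectors. -/
noncomputable def absSin {H : Type*} [NormedAddCommGroup H] [InnerProductSpace ℝ H]
    (x y : H) : ℝ :=
  Real.sqrt (1 - (⟪x, y⟫ / (‖x‖ * ‖y‖)) ^ 2)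

section AbsSin

variable {H : Type*} [NormedAddCommGroup H] [InnerProductSpace ℝ H]

theorem absSin_comm (x y : H) : absSin x y = absSin y x := by
  rw [absSin, absSin, real_inner_comm, mul_comm]

theorem absSin_smul_smul {a b : ℝ} (ha : a ≠ 0) (hb : b ≠ 0) (x y : H) :
    absSin (a • x) (b • y) = absSin x y := by
  have hab : (a * b / (|a| * |b|)) ^ 2 = 1 := by
    rw [div_pow, mul_pow, mul_pow, sq_abs, sq_abs, div_self (by positivity)]
  have hcos : ⟪a • x, b • y⟫ / (‖a • x‖ * ‖b • y‖)
      = a * b / (|a| * |b|) * (⟪x, y⟫ / (‖x‖ * ‖y‖)) := by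
    rw [real_inner_smul_left, real_inner_smul_right, norm_smul, norm_smul,
      Real.norm_eq_abs, Real.norm_eq_abs]
    ring
  rw [absSin, absSin, hcos, mul_pow, hab, one_mul]

variable {x y : H}

theorem absSin_of_norm_eq_one (hx : ‖x‖ = 1) (hy : ‖y‖ = 1) :
    absSin x y = √(1 - ⟪x, y⟫ ^ 2) := by
  rw [absSin, hx, hy, mul_one, div_one]

theorem norm_sub_smul_sq_of_norm_eq_one (hx : ‖x‖ = 1) (hy : ‖y‖ = 1) (c : ℝ) :
    ‖x - c • y‖ ^ 2 = (c - ⟪x, y⟫) ^ 2 + (1 - ⟪x, y⟫ ^ 2) := by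
  rw [norm_sub_sq_real, real_inner_smul_right, norm_smul, mul_pow, hx, hy, Real.norm_eq_abs,
    sq_abs]
  ring

theorem absSin_le_norm_sub_smul (hx : ‖x‖ = 1) (hy : ‖y‖ = 1) (c : ℝ) :
    absSin x y ≤ ‖x - c • y‖ := by
  rw [absSin_of_norm_eq_one hx hy, ← Real.sqrt_sq (norm_nonneg _)]
  apply Real.sqrt_le_sqrt
  rw [norm_sub_smul_sq_of_norm_eq_one hx hy]
  nlinarith [sq_nonneg (c - ⟪x, y⟫)]

theorem absSin_eq_norm_sub_inner_smul (hx : ‖x‖ = 1) (hy : ‖y‖ = 1) :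
    absSin x y = ‖x - ⟪x, y⟫ • y‖ := by
  rw [absSin_of_norm_eq_one hx hy, ← Real.sqrt_sq (norm_nonneg _),
    norm_sub_smul_sq_of_norm_eq_one hx hy, sub_self, zero_pow two_ne_zero, zero_add]

theorem absSin_le_absSin_add_absSin_of_norm_eq_one {z u : H} (hx : ‖x‖ = 1) (hz : ‖z‖ = 1)
    (hu : ‖u‖ = 1) : absSin x z ≤ absSin x u + absSin u z := by
  wlog hle : |⟪x, u⟫| ≤ |⟪z, u⟫| generalizing x z
  · rw [absSin_comm x z, absSin_comm x u, absSin_comm u z, add_comm]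
    exact this hz hx (le_of_not_ge hle)
  set c := ⟪x, u⟫ / ⟪z, u⟫
  have hc : |c| ≤ 1 := by
    rw [abs_div]
    exact div_le_one_of_le₀ hle (abs_nonneg _)
  -- if `⟪z, u⟫ = 0` then also `⟪x, u⟫ = 0`, so the junk value `c = 0` still works
  have hcz : c * ⟪z, u⟫ = ⟪x, u⟫ :=
    div_mul_cancel_of_imp fun h ↦ abs_nonpos_iff.mp (by simpa [h] using hle)
  have hsplit : x - c • z = (x - ⟪x, u⟫ • u) - c • (z - ⟪z, u⟫ • u) := by
    rw [smul_sub, smul_smul, hcz]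
    abel
  calc absSin x z ≤ ‖x - c • z‖ := absSin_le_norm_sub_smul hx hz c
    _ ≤ ‖x - ⟪x, u⟫ • u‖ + |c| * ‖z - ⟪z, u⟫ • u‖ := by
      rw [hsplit, ← Real.norm_eq_abs, ← norm_smul]
      exact norm_sub_le _ _
    _ ≤ ‖x - ⟪x, u⟫ • u‖ + ‖z - ⟪z, u⟫ • u‖ := by
      gcongr
      exact mul_le_of_le_one_left (norm_nonneg _) hc
    _ = absSin x u + absSin u z := by
      rw [absSin_comm u z, absSin_eq_norm_sub_inner_smul hx hu,
        absSin_eq_norm_sub_inner_smul hz hu]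

end AbsSin

theorem sin_triangle_inequality {H : Type*} [NormedAddCommGroup H] [InnerProductSpace ℝ H]
    (v₁ v₂ u : H) (h₁ : v₁ ≠ 0) (h₂ : v₂ ≠ 0) (hu : u ≠ 0) :
    absSin v₁ v₂ ≤ absSin v₁ u + absSin u v₂ := by
  have hunit {v : H} (hv : v ≠ 0) : ‖‖v‖⁻¹ • v‖ = 1 := by
    rw [norm_smul, norm_inv, norm_norm, inv_mul_cancel₀ (norm_ne_zero_iff.mpr hv)]
  have hinv {v : H} (hv : v ≠ 0) : ‖v‖⁻¹ ≠ 0 := inv_ne_zero (norm_ne_zero_iff.mpr hv)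
  have key := absSin_le_absSin_add_absSin_of_norm_eq_one (hunit h₁) (hunit h₂) (hunit hu)
  rwa [absSin_smul_smul (hinv h₁) (hinv h₂), absSin_smul_smul (hinv h₁) (hinv hu),
    absSin_smul_smul (hinv hu) (hinv h₂)] at key
end

section
/- If f : ℝ → ℝ is Lebesgue measurable, not identically zero, and satisfies f(α+β) = (f(α+δ)/f(δ))·f(β) + (f(δ−β)/f(δ))·f(α) for all α, β ∈ ℝ and all δ with f(δ) ≠ 0, then f is an odd function: f(−x) = −f(x) for all x ∈ ℝ. -/
/-!
Substituting `β = -α` gives `f (α + δ) * (f (-α) + f α) = 0` whenever `f δ ≠ 0`. So if `f` failed to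
be odd at `x`, then `f (x + δ) = 0` for every `δ` in the support of `f`. Then `x` itself lies in the
support, `f (2x) = 0`, and the equation at `δ = x` makes `f` symmetric about `x`, so
`f (3x/2) = f (x/2)`, which forces `f (x/2) = 0`. The equation at `α = β = x/2`, `δ = x` then gives
`f x = 0`, a contradiction.
-/

def HasAdditionFormula {G K : Type*} [AddCommGroup G] [Field K] (f : G → K) : Prop :=
  ∀ α β δ : G, f δ ≠ 0 → f (α + β) = f (α + δ) / f δ * f β + f (δ - β) / f δ * f α

namespace HasAdditionFormula

variable {G K : Type*} [AddCommGroup G] [Field K] {f : G → K}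

theorem map_zero (h : HasAdditionFormula f) {δ : G} (hδ : f δ ≠ 0) : f 0 = 0 := by
  have h00 := h 0 0 δ hδ
  simp only [zero_add, add_zero, sub_zero, div_self hδ, one_mul] at h00
  linear_combination -h00

theorem map_add_eq_zero_of_map_neg_ne (h : HasAdditionFormula f) {x δ : G}
    (hx : f (-x) ≠ -f x) (hδ : f δ ≠ 0) : f (x + δ) = 0 := by
  have hxδ := h x (-x) δ hδ
  rw [add_neg_cancel, h.map_zero hδ, sub_neg_eq_add, add_comm δ x] at hxδ
  have hprod : f (x + δ) * (f (-x) + f x) = 0 := by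
    field_simp at hxδ
    linear_combination -hxδ
  exact (mul_eq_zero.mp hprod).resolve_right fun hsum => hx (eq_neg_of_add_eq_zero_left hsum)

theorem map_ne_zero_of_map_add_eq_zero (h : HasAdditionFormula f) {x δ : G} (hδ : f δ ≠ 0)
    (hxδ : f (x + δ) = 0) : f x ≠ 0 := by
  intro hx
  have hδx := h x (δ - x) δ hδ
  rw [add_sub_cancel, sub_sub_cancel, hxδ, hx] at hδx
  simp only [zero_div, zero_mul, mul_zero, add_zero] at hδx
  exact hδ hδx

theorem map_add_eq_map_sub (h : HasAdditionFormula f) {x : G} (hx : f x ≠ 0)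
    (h2x : f (x + x) = 0) (t : G) : f (x + t) = f (x - t) := by
  rw [h x t x hx, h2x, div_mul_cancel₀ _ hx]
  ring

theorem map_neg (h : HasAdditionFormula f) (hne : ∃ δ, f δ ≠ 0) {x y : G} (hy : y + y = x) :
    f (-x) = -f x := by
  obtain ⟨δ, hδ⟩ := hne
  by_contra hodd
  have hsupp : ∀ {δ}, f δ ≠ 0 → f (x + δ) = 0 := h.map_add_eq_zero_of_map_neg_ne hodd
  have hx : f x ≠ 0 := h.map_ne_zero_of_map_add_eq_zero hδ (hsupp hδ)
  have hsymm := h.map_add_eq_map_sub hx (hsupp hx) y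
  have hxy : x - y = y := by rw [← hy, add_sub_cancel_right]
  have hfy : f y = 0 := by
    by_contra hfy
    have hfxy := hsupp hfy
    rw [hsymm, hxy] at hfxy
    exact hfy hfxy
  apply hx
  rw [← hy, h y y (y + y) (hy ▸ hx), hfy]
  ring

end HasAdditionFormula

theorem funcEq_odd_general (f : ℝ → ℝ)
    (hne : ∃ x, f x ≠ 0)
    (heq : ∀ α β δ : ℝ, f δ ≠ 0 →
      f (α + β) = (f (α + δ) / f δ) * f β + (f (δ - β) / f δ) * f α) :
    ∀ x : ℝ, f (-x) = -f x :=
  fun x => HasAdditionFormula.map_neg heq hne (add_halves x)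

theorem funcEq_odd (f : ℝ → ℝ) (hf : Measurable f)
    (hne : ∃ x, f x ≠ 0)
    (heq : ∀ α β δ : ℝ, f δ ≠ 0 →
      f (α + β) = (f (α + δ) / f δ) * f β + (f (δ - β) / f δ) * f α) :
    ∀ x : ℝ, f (-x) = -f x :=
  funcEq_odd_general f hne heq
end

section
/- Every Lebesgue measurable function f : ℝ → ℝ satisfying f(α+β) = (f(α+δ)/f(δ))·f(β) + (f(δ−β)/f(δ))·f(α) for all α, β ∈ ℝ and all δ with f(δ) ≠ 0, is of the form f(x) = c·s_k(x) for some constants c, k ∈ ℝ, where s_k(x) = sin(√k·x)/√k for k > 0, s_0(x) = x, and s_k(x) = sinh(√(−k)·x)/√(−k) for k < 0. Conversely every such function satisfies the equation. -/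
/-!
Fix `d` with `f d ≠ 0`. Specialising the equation shows that `f` is odd and that `f` and
`g y = (f (d + y) + f (d - y)) / (2 f d)` satisfy the sine addition law
`f (x + y) = f x g y + f y g x`. Expanding `f (x + y + z)` in two ways then yields a cosine
addition law `g (x + y) = g x g y + K f x f y`, and `g² - K f² = 1`. So for `ω² = K` the map
`x ↦ g x + ω f x` is a measurable homomorphism from `(ℝ, +)` to `(ℂ, ·)`: circle-valued if
`K < 0`, positive if `K > 0`, and equal to `g = 1` if `K = 0`, where `f` is additive. Such
homomorphisms are exponentials, which gives `sin`, `sinh` or a linear function.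
-/

/-- The generalized sine function on a space of constant curvature `k`. -/
noncomputable def genSin (k : ℝ) : ℝ → ℝ :=
  if 0 < k then fun x => Real.sin (Real.sqrt k * x) / Real.sqrt k
  else if k = 0 then fun x => x
  else fun x => Real.sinh (Real.sqrt (-k) * x) / Real.sqrt (-k)

open Real MeasureTheory
open scoped ContDiff Convolution

lemma genSin_add_mul (k α β δ : ℝ) :
    genSin k (α + β) * genSin k δ =
      genSin k (α + δ) * genSin k β + genSin k (δ - β) * genSin k α := by
  unfold genSin
  split_ifs
  · simp only [mul_add, mul_sub, sin_add, sin_sub]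
    ring
  · ring
  · simp only [mul_add, mul_sub, sinh_add, sinh_sub]
    ring

lemma genSin_zero (x : ℝ) : genSin 0 x = x := by simp [genSin]

lemma mul_genSin_sq (t x : ℝ) : t * genSin (t ^ 2) x = sin (t * x) := by
  rcases eq_or_ne t 0 with rfl | ht
  · simp [genSin]
  rw [genSin, if_pos (by positivity), sqrt_sq_eq_abs]
  rcases abs_choice t with h | h <;> rw [h]
  · field_simp
  · rw [neg_mul, sin_neg]
    field_simp

lemma mul_genSin_neg_sq (t x : ℝ) : t * genSin (-t ^ 2) x = sinh (t * x) := by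
  rcases eq_or_ne t 0 with rfl | ht
  · simp [genSin]
  rw [genSin, if_neg (by nlinarith [sq_pos_of_ne_zero ht]), if_neg (by simpa using ht), neg_neg,
    sqrt_sq_eq_abs]
  rcases abs_choice t with h | h <;> rw [h]
  · field_simp
  · rw [neg_mul, sinh_neg]
    field_simp

lemma eq_mul_of_measurable_of_map_add {a : ℝ → ℝ} (hmeas : Measurable a)
    (hadd : ∀ x y, a (x + y) = a x + a y) (x : ℝ) : a x = a 1 * x := by
  let A : ℝ →+ ℝ := AddMonoidHom.mk' a hadd
  simpa [A, mul_comm] using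
    map_real_smul A (Measure.AddMonoidHom.continuous_of_measurable A hmeas) x 1

lemma eq_exp_of_measurable_of_map_add_eq_mul {h : ℝ → ℝ} (hmeas : Measurable h)
    (hmul : ∀ x y, h (x + y) = h x * h y) (hne : ∀ x, h x ≠ 0) (x : ℝ) :
    h x = exp (log (h 1) * x) := by
  have hpos : ∀ x, 0 < h x := fun x => by
    have h2 := hmul (x / 2) (x / 2)
    rw [add_halves] at h2
    exact (hne x).symm.lt_of_le (h2 ▸ mul_self_nonneg _)
  have hlog := eq_mul_of_measurable_of_map_add (a := fun x => log (h x)) hmeas.log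
    (fun x y => by rw [hmul, log_mul (hne x) (hne y)])
  rw [← hlog, exp_log (hpos x)]

/-- Convolving with a test function `ρ` reproduces `E` up to the factor `∫ ρ • E`, which is
nonzero for some `ρ` as `E` does not vanish a.e.; so `E` is as smooth as `ρ`. -/
lemma differentiable_of_locallyIntegrable_of_map_add_eq_mul {E : ℝ → ℂ}
    (hloc : LocallyIntegrable E) (hne : ¬ ∀ᵐ x, E x = 0)
    (hmul : ∀ x y, E (x + y) = E x * E y) : Differentiable ℝ E := by
  obtain ⟨ρ, hρ, hρc, hc⟩ : ∃ ρ : ℝ → ℝ, ContDiff ℝ ∞ ρ ∧ HasCompactSupport ρ ∧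
      ∫ t, ρ t • E t ≠ 0 := by
    by_contra! h
    exact hne (ae_eq_zero_of_integral_contDiff_smul_eq_zero hloc h)
  set c := ∫ t, ρ t • E t
  let σ : ℝ → ℂ := fun t => (ρ (-t) : ℂ)
  have hσ : ContDiff ℝ ∞ σ := Complex.ofRealCLM.contDiff.comp (hρ.comp contDiff_neg)
  have hσc : HasCompactSupport σ :=
    (hρc.comp_homeomorph (Homeomorph.neg ℝ)).comp_left Complex.ofReal_zero
  have hconv : ∀ x, (E ⋆[ContinuousLinearMap.mul ℝ ℂ] σ) x = c * E x := fun x => calc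
    _ = ∫ t, E (x - t) * σ t := convolution_eq_swap _
    _ = ∫ t, E x * (ρ t • E t) := by
      rw [← integral_neg_eq_self]
      simp [σ, sub_neg_eq_add, hmul, mul_comm, mul_left_comm]
    _ = c * E x := by rw [integral_const_mul, mul_comm]
  have hd := (hσc.contDiff_convolution_right (ContinuousLinearMap.mul ℝ ℂ) hloc hσ).differentiable
    (by simp)
  have hE : E = fun x => c⁻¹ * (E ⋆[ContinuousLinearMap.mul ℝ ℂ] σ) x := by
    ext x
    rw [hconv, inv_mul_cancel_left₀ hc]
  rw [hE]
  exact hd.const_mul c⁻¹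

lemma eq_exp_of_differentiable_of_map_add_eq_mul {E : ℝ → ℂ} (hd : Differentiable ℝ E)
    (hmul : ∀ x y, E (x + y) = E x * E y) (x : ℝ) :
    E x = E 0 * Complex.exp (deriv E 0 * x) := by
  set w := deriv E 0
  have hE' : ∀ x, HasDerivAt E (E x * w) x := fun x => by
    have h0 : HasDerivAt E w (x - x) := by rw [sub_self]; exact (hd 0).hasDerivAt
    refine ((h0.comp_sub_const x x).const_mul (E x)).congr_of_eventuallyEq
      (Filter.Eventually.of_forall fun y => ?_)
    simp only [← hmul, add_sub_cancel]
  have hconst : ∀ y : ℝ, HasDerivAt (fun y : ℝ => E y * Complex.exp (-w * y)) 0 y := fun y =>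
    ((hE' y).fun_mul ((hasDerivAt_id y).ofReal_comp.const_mul (-w)).cexp).congr_deriv
      (by simp only [id_eq, Complex.ofReal_one]; ring)
  have h := is_const_of_deriv_eq_zero (fun y => (hconst y).differentiableAt)
    (fun y => (hconst y).deriv) x 0
  simp only [Complex.ofReal_zero, mul_zero, Complex.exp_zero, mul_one] at h
  rw [← h, mul_assoc, ← Complex.exp_add]
  simp

lemma exists_eq_exp_mul_I_of_measurable {E : ℝ → ℂ} (hmeas : Measurable E)
    (hnorm : ∀ x, ‖E x‖ = 1) (hmul : ∀ x y, E (x + y) = E x * E y) :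
    ∃ b : ℝ, ∀ x, E x = Complex.exp (b * x * Complex.I) := by
  have hloc : LocallyIntegrable E :=
    (locallyIntegrable_const (1 : ℂ)).mono hmeas.aestronglyMeasurable (by simp [hnorm])
  have hne : ¬ ∀ᵐ x, E x = 0 := fun h => by
    obtain ⟨x, hx⟩ := h.exists
    simpa [hx] using hnorm x
  have hd := differentiable_of_locallyIntegrable_of_map_add_eq_mul hloc hne hmul
  have hE0 : E 0 = 1 := by
    refine mul_left_cancel₀ (norm_ne_zero_iff.mp (hnorm 0 ▸ one_ne_zero)) ?_
    rw [mul_one, ← hmul, add_zero]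
  have hexp := eq_exp_of_differentiable_of_map_add_eq_mul hd hmul
  set w := deriv E 0
  have hre : w.re = 0 := by
    simpa [hexp 1, hE0, Complex.norm_exp] using hnorm 1
  refine ⟨w.im, fun x => ?_⟩
  rw [hexp, hE0, one_mul]
  congr 1
  apply Complex.ext <;> simp [hre]

section AdditionLaws

variable {f g : ℝ → ℝ} {K : ℝ}

lemma mul_cos_add_sub_eq (hS : ∀ x y, f (x + y) = f x * g y + f y * g x) (x y z : ℝ) :
    f z * (g (x + y) - g x * g y) = f x * (g (y + z) - g y * g z) := by
  have h := hS (x + y) z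
  rw [add_assoc] at h
  linear_combination hS x (y + z) - h - g z * hS x y + g x * hS y z

lemma exists_cos_add_of_sin_add (hS : ∀ x y, f (x + y) = f x * g y + f y * g x) {d : ℝ}
    (hd : f d ≠ 0) : ∃ K, ∀ x y, g (x + y) = g x * g y + K * f x * f y := by
  refine ⟨(g (d + d) - g d * g d) / (f d * f d), fun x y => ?_⟩
  have hK : (g (d + d) - g d * g d) / (f d * f d) * (f d * f d) = g (d + d) - g d * g d := by
    field_simp
  refine mul_right_cancel₀ (mul_ne_zero hd hd) ?_
  linear_combination f d * mul_cos_add_sub_eq hS x y d + f x * mul_cos_add_sub_eq hS y d d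
    - f x * f y * hK

lemma sq_sub_mul_sq_eq_one (hC : ∀ x y, g (x + y) = g x * g y + K * f x * f y)
    (hg0 : g 0 = 1) (hg : ∀ x, g (-x) = g x) (hf : ∀ x, f (-x) = -f x) (x : ℝ) :
    g x ^ 2 - K * f x ^ 2 = 1 := by
  have h := hC x (-x)
  rw [add_neg_cancel, hg0, hg, hf] at h
  linear_combination -h

lemma exists_eq_mul_genSin_of_neg (hK : K < 0) (hf : Measurable f) (hg : Measurable g)
    (hS : ∀ x y, f (x + y) = f x * g y + f y * g x)
    (hC : ∀ x y, g (x + y) = g x * g y + K * f x * f y) (hP : ∀ x, g x ^ 2 - K * f x ^ 2 = 1) :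
    ∃ c k, ∀ x, f x = c * genSin k x := by
  set r := √(-K)
  have hr : r ^ 2 = -K := sq_sqrt (by linarith)
  have hr0 : r ≠ 0 := (sqrt_pos.2 (by linarith)).ne'
  obtain ⟨b, hb⟩ := exists_eq_exp_mul_I_of_measurable
    (E := fun x => g x + (r * f x : ℝ) * Complex.I) (by fun_prop)
    (fun x => by
      rw [Complex.norm_def, Complex.normSq_add_mul_I, sqrt_eq_one]
      linear_combination hP x + f x ^ 2 * hr)
    (fun x y => by
      apply Complex.ext <;>
        simp only [Complex.add_re, Complex.add_im, Complex.mul_re, Complex.mul_im,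
          Complex.ofReal_re, Complex.ofReal_im, Complex.I_re, Complex.I_im]
      · linear_combination hC x y + f x * f y * hr
      · linear_combination r * hS x y)
  refine ⟨b / r, b ^ 2, fun x => ?_⟩
  have h : r * f x = sin (b * x) := by
    have h := congrArg Complex.im (hb x)
    rwa [← Complex.ofReal_mul, Complex.exp_ofReal_mul_I_im, Complex.add_im, Complex.ofReal_im,
      Complex.im_ofReal_mul, Complex.I_im, mul_one, zero_add] at h
  rw [div_mul_eq_mul_div, mul_genSin_sq, ← h]
  field_simp

lemma exists_eq_mul_genSin_of_zero (hf : Measurable f)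
    (hS : ∀ x y, f (x + y) = f x * g y + f y * g x)
    (hC : ∀ x y, g (x + y) = g x * g y + 0 * f x * f y) (hP : ∀ x, g x ^ 2 - 0 * f x ^ 2 = 1) :
    ∃ c k, ∀ x, f x = c * genSin k x := by
  have hg1 : ∀ x, g x = 1 := fun x => by
    have h := hC (x / 2) (x / 2)
    rw [add_halves] at h
    nlinarith [hP x, sq_nonneg (g (x / 2))]
  have hadd : ∀ x y, f (x + y) = f x + f y := fun x y => by rw [hS, hg1, hg1, mul_one, mul_one]
  exact ⟨f 1, 0, fun x => by rw [genSin_zero, eq_mul_of_measurable_of_map_add hf hadd x]⟩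

lemma exists_eq_mul_genSin_of_pos (hK : 0 < K) (hf : Measurable f) (hg : Measurable g)
    (hS : ∀ x y, f (x + y) = f x * g y + f y * g x)
    (hC : ∀ x y, g (x + y) = g x * g y + K * f x * f y) (hP : ∀ x, g x ^ 2 - K * f x ^ 2 = 1) :
    ∃ c k, ∀ x, f x = c * genSin k x := by
  set r := √K
  have hr : r ^ 2 = K := sq_sqrt hK.le
  have hr0 : r ≠ 0 := (sqrt_pos.2 hK).ne'
  have hinv : ∀ x, (g x + r * f x) * (g x - r * f x) = 1 := fun x => by
    linear_combination hP x - f x ^ 2 * hr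
  have hexp := eq_exp_of_measurable_of_map_add_eq_mul (h := fun x => g x + r * f x) (by fun_prop)
    (fun x y => by linear_combination hC x y + r * hS x y - f x * f y * hr)
    (fun x => left_ne_zero_of_mul_eq_one (hinv x))
  set a := log (g 1 + r * f 1)
  refine ⟨a / r, -a ^ 2, fun x => ?_⟩
  have hminus : g x - r * f x = exp (-(a * x)) := by
    rw [exp_neg, ← hexp x]
    exact eq_inv_of_mul_eq_one_right (hinv x)
  rw [div_mul_eq_mul_div, mul_genSin_neg_sq, sinh_eq, ← hexp x, ← hminus]
  field_simp
  ring

lemma exists_eq_mul_genSin_of_addition_laws (hf : Measurable f) (hg : Measurable g)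
    (hS : ∀ x y, f (x + y) = f x * g y + f y * g x)
    (hC : ∀ x y, g (x + y) = g x * g y + K * f x * f y) (hP : ∀ x, g x ^ 2 - K * f x ^ 2 = 1) :
    ∃ c k, ∀ x, f x = c * genSin k x := by
  rcases lt_trichotomy K 0 with hK | rfl | hK
  · exact exists_eq_mul_genSin_of_neg hK hf hg hS hC hP
  · exact exists_eq_mul_genSin_of_zero hf hS hC hP
  · exact exists_eq_mul_genSin_of_pos hK hf hg hS hC hP

end AdditionLaws

def SolvesSineEquation (f : ℝ → ℝ) : Prop :=
  ∀ α β δ : ℝ, f δ ≠ 0 → f (α + β) * f δ = f (α + δ) * f β + f (δ - β) * f α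

noncomputable def companionCos (f : ℝ → ℝ) (d y : ℝ) : ℝ :=
  (f (d + y) + f (d - y)) / (2 * f d)

section SineEquation

variable {f : ℝ → ℝ} {d : ℝ}

lemma measurable_companionCos (hf : Measurable f) (d : ℝ) : Measurable (companionCos f d) := by
  unfold companionCos
  fun_prop

lemma companionCos_zero (hd : f d ≠ 0) : companionCos f d 0 = 1 := by
  rw [companionCos, add_zero, sub_zero, ← two_mul, div_self (mul_ne_zero two_ne_zero hd)]

lemma companionCos_neg (y : ℝ) : companionCos f d (-y) = companionCos f d y := by
  simp only [companionCos, sub_neg_eq_add, ← sub_eq_add_neg, add_comm]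

namespace SolvesSineEquation

lemma map_zero (hf : SolvesSineEquation f) (hd : f d ≠ 0) : f 0 = 0 := by
  have h := hf 0 0 d hd
  simp only [add_zero, zero_add, sub_zero] at h
  have : f d * f 0 = 0 := by linarith
  exact (mul_eq_zero.mp this).resolve_left hd

lemma mul_eq_mul_neg (hf : SolvesSineEquation f) (hd : f d ≠ 0) (x : ℝ) :
    f x * f d = f (-x) * f (-d) := by
  have h := hf (-d) (x + d) d hd
  rw [show -d + (x + d) = x by ring, show d - (x + d) = -x by ring, neg_add_cancel,
    hf.map_zero hd] at h
  linarith

/-- An even solution would satisfy `f (α + β) = f (α - β)`, hence `f d = f 0 = 0`. -/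
lemma map_neg_ne (hf : SolvesSineEquation f) (hd : f d ≠ 0) : f (-d) ≠ f d := by
  intro heven
  have hev : ∀ x, f (-x) = f x := fun x =>
    mul_right_cancel₀ hd (by rw [hf.mul_eq_mul_neg hd x, heven])
  have hdiff : ∀ α β, (f (α + β) - f (α - β)) * f d = (f (d - β) - f (d + β)) * f α := by
    intro α β
    have h := hf α (-β) d hd
    rw [hev, ← sub_eq_add_neg, sub_neg_eq_add] at h
    linear_combination hf α β d hd - h
  have hsym : ∀ β, f (d + β) = f (d - β) := fun β => by
    have : (f (d + β) - f (d - β)) * (2 * f d) = 0 := by linear_combination hdiff d β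
    linarith [(mul_eq_zero.mp this).resolve_right (by positivity)]
  have h := hdiff (d / 2) (d / 2)
  simp only [hsym, sub_self, zero_mul, add_halves, hf.map_zero hd, sub_zero] at h
  exact hd (mul_self_eq_zero.mp h)

lemma map_neg (hf : SolvesSineEquation f) (hd : f d ≠ 0) (x : ℝ) : f (-x) = -f x := by
  have hsq : (f (-d) - f d) * (f (-d) + f d) = 0 := by
    linear_combination -(hf.mul_eq_mul_neg hd d)
  have hneg : f (-d) = -f d := by
    linarith [(mul_eq_zero.mp hsq).resolve_left (sub_ne_zero.mpr (hf.map_neg_ne hd))]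
  have h : (f (-x) + f x) * f d = 0 := by
    linear_combination hf.mul_eq_mul_neg hd x + f (-x) * hneg
  linarith [(mul_eq_zero.mp h).resolve_right hd]

lemma add_add_sub (hf : SolvesSineEquation f) (hd : f d ≠ 0) (x y : ℝ) :
    f (x + y) + f (x - y) = 2 * f x * companionCos f d y := by
  have h := hf x (-y) d hd
  rw [hf.map_neg hd, ← sub_eq_add_neg, sub_neg_eq_add] at h
  have hg : companionCos f d y * (2 * f d) = f (d + y) + f (d - y) := by
    unfold companionCos
    field_simp
  refine mul_right_cancel₀ hd ?_
  linear_combination hf x y d hd + h - f x * hg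

lemma sin_add (hf : SolvesSineEquation f) (hd : f d ≠ 0) (x y : ℝ) :
    f (x + y) = f x * companionCos f d y + f y * companionCos f d x := by
  have h := hf.add_add_sub hd y x
  rw [add_comm y, ← neg_sub, hf.map_neg hd] at h
  linarith [hf.add_add_sub hd x y]

end SolvesSineEquation

end SineEquation

theorem funcEq_characterization (f : ℝ → ℝ) (hf : Measurable f) :
    (∀ α β δ : ℝ, f δ ≠ 0 →
        f (α + β) * f δ = f (α + δ) * f β + f (δ - β) * f α) ↔
      ∃ c k : ℝ, ∀ x, f x = c * genSin k x := by
  refine ⟨fun hsol => ?_, fun ⟨c, k, hck⟩ α β δ _ => ?_⟩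
  · by_cases hzero : ∀ x, f x = 0
    · exact ⟨0, 0, fun x => by rw [hzero x, zero_mul]⟩
    obtain ⟨d, hd⟩ := not_forall.mp hzero
    have hS := SolvesSineEquation.sin_add hsol hd
    obtain ⟨K, hC⟩ := exists_cos_add_of_sin_add hS hd
    exact exists_eq_mul_genSin_of_addition_laws hf (measurable_companionCos hf d) hS hC
      (sq_sub_mul_sq_eq_one hC (companionCos_zero hd) companionCos_neg
        (SolvesSineEquation.map_neg hsol hd))
  · simp only [hck]
    linear_combination c ^ 2 * genSin_add_mul k α β δ
end

section
/- Let H be a real inner product space, d ≥ 1, v₁,…,v_{d+1} ∈ H with v₁,…,v_{d+1} all nonzero, and define the polar sine |p_d sin₀(v₁,…,v_{d+1})| = sqrt(det Gram(v₁,…,v_{d+1})) / ∏ⱼ‖vⱼ‖ (set to 0 if some vⱼ = 0). Then |p_d sin₀(v₁,…,v_{d+1})| = sin(θ(v_{d+1}, span{v₁,…,v_d})) · |p_{d−1} sin₀(v₁,…,v_d)|, where sin(θ(u,W)) := dist(u,W)/‖u‖ is the elevation sine of u with respect to the subspace W. -/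
open scoped RealInnerProductSpace

/-!
Subtracting from the last vector its orthogonal projection onto the span of the others is a
unimodular change of the family, so it leaves the Gram determinant unchanged. The residual is
orthogonal to the other vectors, which makes its Gram matrix block diagonal with determinant
`dist(v_{d+1}, W)² · det Gram(v₁, …, v_d)`; the factor `‖v_{d+1}‖` splits off the product of
the norms.
-/

/-- The `k`-dimensional content: the square root of the Gram determinant. -/
noncomputable def gramContent {H : Type*} [NormedAddCommGroup H] [InnerProductSpace ℝ H]
    {k : ℕ} (v : Fin k → H) : ℝ :=
  Real.sqrt (Matrix.det (Matrix.of fun i j => ⟪v i, v j⟫))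

/-- The polar sine at the origin: the Gram content divided by the product of the norms
(equal to `0` if some vector vanishes, by the convention `x / 0 = 0`). -/
noncomputable def polarSin {H : Type*} [NormedAddCommGroup H] [InnerProductSpace ℝ H]
    {k : ℕ} (v : Fin k → H) : ℝ :=
  gramContent v / ∏ j, ‖v j‖

theorem Submodule.infDist_eq_norm_sub_starProjection {𝕜 E : Type*} [RCLike 𝕜]
    [NormedAddCommGroup E] [InnerProductSpace 𝕜 E] (K : Submodule 𝕜 E)
    [K.HasOrthogonalProjection] (x : E) :
    Metric.infDist x K = ‖x - K.starProjection x‖ := by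
  simp only [Metric.infDist_eq_iInf, K.starProjection_minimal, dist_eq_norm]
  rfl

namespace Matrix

variable {E : Type*} [NormedAddCommGroup E] [InnerProductSpace ℝ E]

theorem gram_sum_smul {m n : Type*} [Fintype m] (A : Matrix n m ℝ) (v : m → E) :
    gram ℝ (fun i => ∑ j, A i j • v j) = A * gram ℝ v * Aᵀ := by
  ext i j
  simp only [gram_apply, mul_apply, transpose_apply, sum_inner, inner_sum, real_inner_smul_left,
    real_inner_smul_right, Finset.sum_mul]
  exact Finset.sum_congr rfl fun k _ => Finset.sum_congr rfl fun l _ => by ring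

theorem det_gram_update_sum_smul {n : Type*} [Fintype n] [DecidableEq n] (v : n → E) (i : n)
    (c : n → ℝ) (hc : c i = 1) :
    (gram ℝ (Function.update v i (∑ j, c j • v j))).det = (gram ℝ v).det := by
  have hcomb : Function.update v i (∑ j, c j • v j) =
      fun k => ∑ j, (1 : Matrix n n ℝ).updateRow i c k j • v j := by
    ext k
    rcases eq_or_ne k i with rfl | hk
    · simp
    · simp [hk, one_apply]
  have hdetA : ((1 : Matrix n n ℝ).updateRow i c).det = 1 := by
    have hrow : ∑ k, c k • (1 : Matrix n n ℝ) k = c := by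
      ext l
      simp [one_apply]
    simpa [hrow, hc] using det_updateRow_sum (1 : Matrix n n ℝ) i c
  rw [hcomb, gram_sum_smul, det_mul, det_mul, det_transpose, hdetA, one_mul, mul_one]

theorem det_gram_snoc_of_forall_inner_eq_zero {d : ℕ} (f : Fin d → E) (u : E)
    (hu : ∀ i, ⟪f i, u⟫ = 0) :
    (gram ℝ (Fin.snoc f u : Fin (d + 1) → E)).det = ‖u‖ ^ 2 * (gram ℝ f).det := by
  rw [det_succ_row _ (Fin.last d), Finset.sum_eq_single (Fin.last d)]
  · simp [gram, submatrix, sq, mul_comm]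
  · intro j _ hj
    obtain ⟨k, rfl⟩ := Fin.exists_castSucc_eq.2 hj
    simp [gram_apply, real_inner_comm (f k) u, hu k]
  · simp

theorem det_gram_snoc_add_of_mem_span {d : ℕ} (f : Fin d → E) (u : E) {p : E}
    (hp : p ∈ Submodule.span ℝ (Set.range f)) :
    (gram ℝ (Fin.snoc f (u + p) : Fin (d + 1) → E)).det =
      (gram ℝ (Fin.snoc f u : Fin (d + 1) → E)).det := by
  obtain ⟨c, rfl⟩ := (Submodule.mem_span_range_iff_exists_fun ℝ).1 hp
  have hcomb : (Fin.snoc f (u + ∑ i, c i • f i) : Fin (d + 1) → E) =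
      Function.update (Fin.snoc f u) (Fin.last d)
        (∑ j, (Fin.snoc c 1 : Fin (d + 1) → ℝ) j • (Fin.snoc f u : Fin (d + 1) → E) j) := by
    simp [Fin.update_snoc_last, Fin.sum_univ_castSucc, add_comm]
  rw [hcomb, det_gram_update_sum_smul _ _ _ (by simp)]

end Matrix

open Matrix in
theorem gramContent_snoc {E : Type*} [NormedAddCommGroup E] [InnerProductSpace ℝ E] {d : ℕ}
    (f : Fin d → E) (w : E) :
    gramContent (Fin.snoc f w : Fin (d + 1) → E) =
      Metric.infDist w (Submodule.span ℝ (Set.range f)) * gramContent f := by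
  set K := Submodule.span ℝ (Set.range f)
  have : FiniteDimensional ℝ K := FiniteDimensional.span_of_finite ℝ (Set.finite_range f)
  set u := w - K.starProjection w
  have hu : ∀ i, ⟪f i, u⟫ = 0 := fun i =>
    K.sub_starProjection_mem_orthogonal w _ (Submodule.subset_span (Set.mem_range_self i))
  have hdet : (gram ℝ (Fin.snoc f w : Fin (d + 1) → E)).det = ‖u‖ ^ 2 * (gram ℝ f).det := by
    rw [← det_gram_snoc_of_forall_inner_eq_zero f u hu,
      ← det_gram_snoc_add_of_mem_span f u (K.starProjection_apply_mem w), sub_add_cancel]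
  change √(gram ℝ _).det = _ * √(gram ℝ f).det
  rw [hdet, Real.sqrt_mul (sq_nonneg _), Real.sqrt_sq (norm_nonneg _),
    K.infDist_eq_norm_sub_starProjection]

theorem polarSin_product_formula_general {H : Type*} [NormedAddCommGroup H] [InnerProductSpace ℝ H]
    {d : ℕ} (v : Fin (d + 1) → H) :
    polarSin v =
      (Metric.infDist (v (Fin.last d))
          (Submodule.span ℝ (Set.range fun i : Fin d => v i.castSucc) : Set H) /
        ‖v (Fin.last d)‖) *
        polarSin (fun i : Fin d => v i.castSucc) := by
  have hsnoc : gramContent v = Metric.infDist (v (Fin.last d))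
      (Submodule.span ℝ (Set.range fun i : Fin d => v i.castSucc)) *
        gramContent (fun i : Fin d => v i.castSucc) := by
    conv_lhs => rw [← Fin.snoc_init_self v]
    exact gramContent_snoc (Fin.init v) (v (Fin.last d))
  rw [polarSin, polarSin, hsnoc, Fin.prod_univ_castSucc, div_mul_div_comm, mul_comm ‖_‖]

theorem polarSin_product_formula {H : Type*} [NormedAddCommGroup H] [InnerProductSpace ℝ H]
    {d : ℕ} (hd : 1 ≤ d) (v : Fin (d + 1) → H) (hv : ∀ i, v i ≠ 0) :
    polarSin v =
      (Metric.infDist (v (Fin.last d))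
          (Submodule.span ℝ (Set.range fun i : Fin d => v i.castSucc) : Set H) /
        ‖v (Fin.last d)‖) *
        polarSin (fun i : Fin d => v i.castSucc) :=
  polarSin_product_formula_general v
end

section
/- Let H be a real inner product space, V a (d+1)-dimensional subspace of H, v₁,…,v_d ∈ V, u ∈ H, and P_V the orthogonal projection onto V. Then |p_d sin₀(v₁,…,v_d,P_V(u))| ≤ |p_d sin₀(v₁,…,v_d,u)|, where |p_d sin₀(w₁,…,w_{d+1})| = sqrt(det Gram(w₁,…,w_{d+1}))/∏ⱼ‖wⱼ‖ (defined as 0 if some ‖wⱼ‖ = 0). -/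
open scoped RealInnerProductSpace

/-!
Let `W` be the span of the `vᵢ`. The Gram determinant is base times height squared,
`det G(v, x) = ‖x - P_W x‖² · det G(v)`, so `polarSin (v, x) = polarSin v · ‖x - P_W x‖ / ‖x‖`
and only the sine of the angle between `x` and `W` depends on `x`. As `W ≤ V`, `P_W (P_V u) = P_W u`,
and Pythagoras writes the two sines as `h / p` and `√(r² + h²) / √(r² + p²)`, where
`r = ‖u - P_V u‖` and `h = ‖P_V u - P_W u‖ ≤ p = ‖P_V u‖`. Adding `r²` to both terms of a ratio
at most one can only increase it.
-/

section

open Matrix Submodule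

instance FiniteDimensional.span_range {K V ι : Type*} [DivisionRing K] [AddCommGroup V]
    [Module K V] [Finite ι] (v : ι → V) : FiniteDimensional K (span K (Set.range v)) :=
  FiniteDimensional.span_of_finite K (Set.finite_range v)

theorem Matrix.det_add_single_self {R : Type*} [CommRing R] {n : ℕ}
    (M : Matrix (Fin (n + 1)) (Fin (n + 1)) R) (i : Fin (n + 1)) (c : R) :
    (M + single i i c).det = M.det + c * (M.submatrix i.succAbove i.succAbove).det := by
  have hrow : M + single i i c = M.updateRow i (M i + c • Pi.single i 1) := by
    ext j k
    rcases eq_or_ne j i with rfl | hj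
    · rcases eq_or_ne k j with rfl | hk <;> simp [*, Ne.symm]
    · simp [hj.symm, hj]
  rw [hrow, det_updateRow_add, updateRow_eq_self, det_updateRow_smul, ← adjugate_apply,
    adjugate_fin_succ_eq_det_submatrix, ← two_mul, pow_mul, neg_one_sq, one_pow, one_mul]

section Gram

variable {𝕜 E : Type*} [RCLike 𝕜] [NormedAddCommGroup E] [InnerProductSpace 𝕜 E]

theorem Matrix.gram_add_of_inner_eq_zero {n : Type*} {v w : n → E}
    (h : ∀ i j, inner 𝕜 (v i) (w j) = 0) : gram 𝕜 (v + w) = gram 𝕜 v + gram 𝕜 w := by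
  ext i j
  simp [gram_apply, inner_add_left, inner_add_right, h, inner_eq_zero_symm.mp (h _ _)]

end Gram

variable {H : Type*} [NormedAddCommGroup H] [InnerProductSpace ℝ H]

theorem Matrix.det_gram_snoc_add {d : ℕ} (v : Fin d → H) {y z : H}
    (hvz : ∀ i, ⟪v i, z⟫ = 0) (hyz : ⟪y, z⟫ = 0) :
    (gram ℝ (Fin.snoc v (y + z) : Fin (d + 1) → H)).det =
      (gram ℝ (Fin.snoc v y : Fin (d + 1) → H)).det + ‖z‖ ^ 2 * (gram ℝ v).det := by
  have hsplit : (Fin.snoc v (y + z) : Fin (d + 1) → H) =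
      Fin.snoc v y + Pi.single (Fin.last d) z := by
    ext i
    refine Fin.lastCases ?_ (fun j => ?_) i <;> simp
  have horth : ∀ i j, ⟪(Fin.snoc v y : Fin (d + 1) → H) i,
      (Pi.single (Fin.last d) z : Fin (d + 1) → H) j⟫ = 0 := by
    intro i j
    rcases eq_or_ne j (Fin.last d) with rfl | hj
    · refine Fin.lastCases ?_ (fun k => ?_) i <;> simp [hvz, hyz]
    · simp [hj]
  have hminor : (gram ℝ (Fin.snoc v y : Fin (d + 1) → H)).submatrix Fin.castSucc Fin.castSucc =
      gram ℝ v := by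
    ext i j
    simp [gram_apply]
  rw [hsplit, gram_add_of_inner_eq_zero horth, gram_single, det_add_single_self,
    Fin.succAbove_last, hminor, real_inner_self_eq_norm_sq]

theorem Matrix.det_gram_snoc {d : ℕ} (v : Fin d → H) (x : H) :
    (gram ℝ (Fin.snoc v x : Fin (d + 1) → H)).det =
      ‖x - (span ℝ (Set.range v)).starProjection x‖ ^ 2 * (gram ℝ v).det := by
  set W := span ℝ (Set.range v)
  have hperp := (mem_orthogonal W _).mp (W.sub_starProjection_mem_orthogonal x)
  have hdep : (gram ℝ (Fin.snoc v (W.starProjection x) : Fin (d + 1) → H)).det = 0 := by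
    by_contra h
    exact (linearIndependent_finSnoc.mp (det_gram_ne_zero_iff_linearIndependent.mp h)).2
      (W.starProjection_apply_mem x)
  conv_lhs => rw [← add_sub_cancel (W.starProjection x) x]
  rw [det_gram_snoc_add v (fun i => hperp _ (subset_span ⟨i, rfl⟩))
    (hperp _ (W.starProjection_apply_mem x)), hdep, zero_add]

theorem polarSin_snoc {d : ℕ} (v : Fin d → H) (x : H) :
    polarSin (Fin.snoc v x : Fin (d + 1) → H) =
      polarSin v * (‖x - (span ℝ (Set.range v)).starProjection x‖ / ‖x‖) := by
  have hdet := det_gram_snoc v x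
  simp only [gram] at hdet
  rw [polarSin, polarSin, gramContent, gramContent, hdet, Real.sqrt_mul (sq_nonneg _),
    Real.sqrt_sq (norm_nonneg _), Fin.prod_univ_castSucc]
  simp only [Fin.snoc_castSucc, Fin.snoc_last]
  rw [mul_comm ‖_‖, mul_div_mul_comm]

theorem polarSin_nonneg {k : ℕ} (v : Fin k → H) : 0 ≤ polarSin v :=
  div_nonneg (Real.sqrt_nonneg _) (Finset.prod_nonneg fun i _ => norm_nonneg (v i))

theorem div_le_div_of_mul_self_eq_add {h p a n r : ℝ} (hh : 0 ≤ h) (hhp : h ≤ p) (ha : 0 ≤ a)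
    (hn : 0 ≤ n) (ha' : a * a = r * r + h * h) (hn' : n * n = r * r + p * p) :
    h / p ≤ a / n := by
  rcases (hh.trans hhp).eq_or_lt with hp | hp
  · rw [← hp, div_zero]
    exact div_nonneg ha hn
  have hn : 0 < n := hn.lt_of_ne (by rintro rfl; nlinarith)
  rw [div_le_div_iff₀ hp hn, mul_self_le_mul_self_iff (by positivity) (by positivity)]
  nlinarith [mul_le_mul hhp hhp hh hp.le, mul_self_nonneg r]

theorem Submodule.norm_sub_mul_self_eq_of_mem (K : Submodule ℝ H) [K.HasOrthogonalProjection]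
    (u : H) {w : H} (hw : w ∈ K) :
    ‖u - w‖ * ‖u - w‖ =
      ‖u - K.starProjection u‖ * ‖u - K.starProjection u‖ +
        ‖K.starProjection u - w‖ * ‖K.starProjection u - w‖ := by
  rw [← norm_add_sq_eq_norm_sq_add_norm_sq_real, sub_add_sub_cancel]
  exact inner_eq_zero_symm.mp <|
    K.sub_starProjection_mem_orthogonal u _ (K.sub_mem (K.starProjection_apply_mem u) hw)

theorem Submodule.norm_sub_starProjection_div_norm_le {W V : Submodule ℝ H}
    [W.HasOrthogonalProjection] [V.HasOrthogonalProjection] (hWV : W ≤ V) (u : H) :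
    ‖V.starProjection u - W.starProjection (V.starProjection u)‖ / ‖V.starProjection u‖ ≤
      ‖u - W.starProjection u‖ / ‖u‖ := by
  have hWu : W.starProjection (V.starProjection u) = W.starProjection u := by
    rw [starProjection_apply, orthogonalProjectionOnto_starProjection_of_le hWV]
    rfl
  have hle := Wᗮ.norm_starProjection_apply_le (V.starProjection u)
  rw [starProjection_orthogonal_val] at hle
  rw [hWu] at hle ⊢
  refine div_le_div_of_mul_self_eq_add (norm_nonneg _) hle (norm_nonneg _) (norm_nonneg _)
    (V.norm_sub_mul_self_eq_of_mem u (hWV (W.starProjection_apply_mem u))) ?_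
  simpa using V.norm_sub_mul_self_eq_of_mem u V.zero_mem

end

theorem polarSin_projection_le_general {H : Type*} [NormedAddCommGroup H] [InnerProductSpace ℝ H]
    {d : ℕ} (V : Submodule ℝ H) [FiniteDimensional ℝ V]
    (v : Fin d → H) (hv : ∀ i, v i ∈ V) (u : H) :
    polarSin (Fin.snoc v ((V.orthogonalProjectionOnto u : V) : H)) ≤
      polarSin (Fin.snoc v u) := by
  have hWV : Submodule.span ℝ (Set.range v) ≤ V :=
    Submodule.span_le.mpr (Set.range_subset_iff.mpr hv)
  rw [polarSin_snoc, polarSin_snoc]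
  exact mul_le_mul_of_nonneg_left (Submodule.norm_sub_starProjection_div_norm_le hWV u)
    (polarSin_nonneg v)

theorem polarSin_projection_le {H : Type*} [NormedAddCommGroup H] [InnerProductSpace ℝ H]
    {d : ℕ} (V : Submodule ℝ H) [FiniteDimensional ℝ V]
    (hV : Module.finrank ℝ V = d + 1)
    (v : Fin d → H) (hv : ∀ i, v i ∈ V) (u : H) :
    polarSin (Fin.snoc v ((V.orthogonalProjectionOnto u : V) : H)) ≤
      polarSin (Fin.snoc v u) :=
  polarSin_projection_le_general V v hv u
end

section
/- Let 0 ≤ s ≤ 1, k ≥ 3, V a k-dimensional real inner product space, and V₁, V₂ two distinct (k−1)-dimensional subspaces of V. Let v₁ ∈ V₁∖V₂ and v₂ ∈ V₂∖V₁. Denote by θ(u,W) = arcsin(dist(u,W)/‖u‖) the elevation angle of a nonzero vector u with respect to a subspace W, and Θ = max{θ(v₁, V₁∩V₂), θ(v₂, V₁∩V₂)}. Then Cone((2s/(√5·π))·θ(v₁,V₂), V₂, 0) ∩ Cone((2s/(√5·π))·θ(v₂,V₁), V₁, 0) ⊆ Cone(s·Θ, V₁∩V₂, 0), where Cone(θ,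 W, 0) = {u : dist(u,W) ≤ ‖u‖·sin(θ)}. -/
open Metric

/-- The elevation angle of `u` with respect to a subspace `W`. -/
noncomputable def elevAngle {V : Type*} [NormedAddCommGroup V] [InnerProductSpace ℝ V]
    (u : V) (W : Submodule ℝ V) : ℝ :=
  Real.arcsin (Metric.infDist u (W : Set V) / ‖u‖)

/-- The cone around a subspace `W` centered at `0` with opening angle `θ`. -/
def cone {V : Type*} [NormedAddCommGroup V] [InnerProductSpace ℝ V]
    (θ : ℝ) (W : Submodule ℝ V) : Set V :=
  {u | Metric.infDist u (W : Set V) ≤ ‖u‖ * Real.sin θ}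

/-!
Write `Vᵢ = (ℝ ∙ nᵢ)ᗮ` with unit normals `nᵢ`, so that `c = ⟪n₁, n₂⟫` satisfies `|c| < 1`.
For `u : V` put `a = ⟪n₁, u⟫`, `b = ⟪n₂, u⟫` and `d = dist(u, V₁ ∩ V₂)`; projecting onto
`span {n₁, n₂}` gives `(1 - c²) d² = a² + b² - 2abc`. Hence `√(1 - c²) d ≤ |a| + |b|` always, and
`√(1 - c²) d = |b|` when `a = 0`, i.e. `sin θ(v₁, V₂) = √(1 - c²) sin θ(v₁, V₁ ∩ V₂)` (and
symmetrically for `v₂`). The cone conditions together with `sin x ≤ x ≤ (π / 2) sin x` on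
`[0, π / 2]` bound `|a|` and `|b|`, which yields `d ≤ (2s / √5) ‖u‖ sin Θ ≤ ‖u‖ s sin Θ`, and
concavity of `sin` gives `s sin Θ ≤ sin (s Θ)`.
-/

open Real Submodule
open scoped RealInnerProductSpace

namespace Real

theorem mul_sin_le_sin_mul {t x : ℝ} (ht₀ : 0 ≤ t) (ht₁ : t ≤ 1) (hx₀ : 0 ≤ x) (hx : x ≤ π) :
    t * sin x ≤ sin (t * x) := by
  simpa using strictConcaveOn_sin_Icc.concaveOn.2 (Set.mem_Icc.2 ⟨le_rfl, pi_pos.le⟩)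
    (Set.mem_Icc.2 ⟨hx₀, hx⟩) (sub_nonneg.2 ht₁) ht₀ (by ring)

theorem two_mul_div_sqrt_five_mul_sin_le_sin_mul {t x : ℝ} (ht₀ : 0 ≤ t) (ht₁ : t ≤ 1)
    (hx₀ : 0 ≤ x) (hx : x ≤ π) : 2 * t / √5 * sin x ≤ sin (t * x) := by
  have h5 : 2 ≤ √5 := le_sqrt_of_sq_le (by norm_num)
  calc 2 * t / √5 * sin x ≤ t * sin x := by
        gcongr
        · exact sin_nonneg_of_nonneg_of_le_pi hx₀ hx
        · rw [div_le_iff₀ (by positivity)]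
          linarith [mul_le_mul_of_nonneg_left h5 ht₀]
    _ ≤ sin (t * x) := mul_sin_le_sin_mul ht₀ ht₁ hx₀ hx

theorem sin_mul_le_mul_pi_div_two_mul_sin {t x : ℝ} (ht : 0 ≤ t) (hx₀ : 0 ≤ x)
    (hx : x ≤ π / 2) : sin (t * x) ≤ t * (π / 2 * sin x) := by
  have jordan : x ≤ π / 2 * sin x := by
    have := mul_le_sin hx₀ hx
    rw [div_mul_eq_mul_div, div_le_iff₀ pi_pos] at this
    linarith
  calc sin (t * x) ≤ t * x := sin_le (by positivity)
    _ ≤ t * (π / 2 * sin x) := by gcongr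

end Real

section

variable {V : Type*} [NormedAddCommGroup V] [InnerProductSpace ℝ V]

namespace Submodule

theorem infDist_eq_norm_sub_starProjection_s19 (K : Submodule ℝ V) [K.HasOrthogonalProjection]
    (u : V) : infDist u (K : Set V) = ‖u - K.starProjection u‖ := by
  rw [infDist_eq_iInf, starProjection_minimal]
  simp_rw [dist_eq_norm]
  rfl

theorem infDist_orthogonal_eq_norm_starProjection (K : Submodule ℝ V)
    [K.HasOrthogonalProjection] (u : V) :
    infDist u (Kᗮ : Set V) = ‖K.starProjection u‖ := by
  rw [infDist_eq_norm_sub_starProjection_s19, starProjection_orthogonal]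
  simp

theorem exists_norm_eq_one_eq_orthogonal_span_singleton (K : Submodule ℝ V)
    [K.HasOrthogonalProjection] (hK : Module.finrank ℝ Kᗮ = 1) :
    ∃ n : V, ‖n‖ = 1 ∧ K = (ℝ ∙ n)ᗮ := by
  have : FiniteDimensional ℝ Kᗮ := Module.finite_of_finrank_eq_succ hK
  obtain ⟨v, hv, hv₀⟩ := exists_mem_ne_zero_of_ne_bot fun h : Kᗮ = ⊥ => by
    rw [h, finrank_bot] at hK
    exact zero_ne_one hK
  have hn : ‖‖v‖⁻¹ • v‖ = 1 := by simp [norm_smul, hv₀]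
  refine ⟨‖v‖⁻¹ • v, hn, ?_⟩
  have hspan : (ℝ ∙ ‖v‖⁻¹ • v) = Kᗮ := eq_of_le_of_finrank_eq
    (span_singleton_le_iff_mem _ _ |>.2 (smul_mem _ _ hv))
    (by rw [finrank_span_singleton (norm_ne_zero_iff.1 (by simp [hn])), hK])
  rw [hspan, orthogonal_orthogonal]

end Submodule

theorem infDist_orthogonal_span_singleton_eq_abs_inner {n : V} (hn : ‖n‖ = 1) (u : V) :
    infDist u ((ℝ ∙ n)ᗮ : Set V) = |⟪n, u⟫| := by
  rw [infDist_orthogonal_eq_norm_starProjection, starProjection_unit_singleton ℝ hn, norm_smul,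
    hn, mul_one, Real.norm_eq_abs]

theorem sin_elevAngle (S : Submodule ℝ V) (u : V) :
    sin (elevAngle u S) = infDist u (S : Set V) / ‖u‖ := by
  rcases eq_or_ne u 0 with rfl | hu
  · simp [elevAngle]
  have hnu : 0 < ‖u‖ := norm_pos_iff.2 hu
  have hle : infDist u (S : Set V) ≤ ‖u‖ := by
    simpa using infDist_le_dist_of_mem (x := u) S.zero_mem
  rw [elevAngle, sin_arcsin (neg_one_lt_zero.le.trans (div_nonneg infDist_nonneg hnu.le))
    ((div_le_one hnu).2 hle)]

theorem elevAngle_nonneg (S : Submodule ℝ V) (u : V) : 0 ≤ elevAngle u S :=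
  arcsin_nonneg.2 (div_nonneg infDist_nonneg (norm_nonneg u))

theorem elevAngle_le_pi_div_two (S : Submodule ℝ V) (u : V) : elevAngle u S ≤ π / 2 :=
  arcsin_le_pi_div_two _

section UnitNormals

variable {n₁ n₂ : V}

theorem abs_real_inner_le_one (h₁ : ‖n₁‖ = 1) (h₂ : ‖n₂‖ = 1) : |⟪n₁, n₂⟫| ≤ 1 := by
  simpa [h₁, h₂] using abs_real_inner_le_norm n₁ n₂

theorem abs_real_inner_lt_one_of_orthogonal_ne (h₁ : ‖n₁‖ = 1) (h₂ : ‖n₂‖ = 1)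
    (hne : (ℝ ∙ n₁)ᗮ ≠ (ℝ ∙ n₂)ᗮ) : |⟪n₁, n₂⟫| < 1 := by
  refine (abs_real_inner_le_one h₁ h₂).lt_of_ne fun h => hne ?_
  obtain ⟨-, r, hr, rfl⟩ :=
    (abs_real_inner_div_norm_mul_norm_eq_one_iff n₁ n₂).1 (by simpa [h₁, h₂])
  rw [span_singleton_smul_eq (IsUnit.mk0 r hr)]

theorem one_sub_inner_sq_mul_norm_sq (h₁ : ‖n₁‖ = 1) (h₂ : ‖n₂‖ = 1) (x y : ℝ) :
    (1 - ⟪n₁, n₂⟫ ^ 2) * ‖x • n₁ + y • n₂‖ ^ 2 =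
      ⟪n₁, x • n₁ + y • n₂⟫ ^ 2 + ⟪n₂, x • n₁ + y • n₂⟫ ^ 2 -
        2 * ⟪n₁, x • n₁ + y • n₂⟫ * ⟪n₂, x • n₁ + y • n₂⟫ * ⟪n₁, n₂⟫ := by
  have e₁ : ⟪n₁, n₁⟫ = 1 := by simp [h₁]
  have e₂ : ⟪n₂, n₂⟫ = 1 := by simp [h₂]
  rw [← real_inner_self_eq_norm_sq]
  simp only [inner_add_left, inner_add_right, real_inner_smul_left, real_inner_smul_right,
    e₁, e₂, real_inner_comm n₂ n₁]
  ring

theorem one_sub_inner_sq_mul_infDist_sq (h₁ : ‖n₁‖ = 1) (h₂ : ‖n₂‖ = 1) (u : V) :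
    (1 - ⟪n₁, n₂⟫ ^ 2) * infDist u ((ℝ ∙ n₁)ᗮ ⊓ (ℝ ∙ n₂)ᗮ : Submodule ℝ V) ^ 2 =
      ⟪n₁, u⟫ ^ 2 + ⟪n₂, u⟫ ^ 2 - 2 * ⟪n₁, u⟫ * ⟪n₂, u⟫ * ⟪n₁, n₂⟫ := by
  set K := (ℝ ∙ n₁) ⊔ (ℝ ∙ n₂)
  have hK : ∀ n ∈ K, ⟪n, u⟫ = ⟪n, K.starProjection u⟫ := fun n hn => by
    rw [← inner_starProjection_left_eq_right, starProjection_eq_self_iff.2 hn]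
  obtain ⟨_, hx, _, hy, hxy⟩ := mem_sup.1 (K.starProjection_apply_mem u)
  obtain ⟨x, rfl⟩ := mem_span_singleton.1 hx
  obtain ⟨y, rfl⟩ := mem_span_singleton.1 hy
  rw [inf_orthogonal, infDist_orthogonal_eq_norm_starProjection,
    hK n₁ (mem_sup_left (mem_span_singleton_self n₁)),
    hK n₂ (mem_sup_right (mem_span_singleton_self n₂)), ← hxy, one_sub_inner_sq_mul_norm_sq h₁ h₂]

theorem sqrt_one_sub_inner_sq_mul_infDist_le (h₁ : ‖n₁‖ = 1) (h₂ : ‖n₂‖ = 1) (u : V) :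
    √(1 - ⟪n₁, n₂⟫ ^ 2) * infDist u ((ℝ ∙ n₁)ᗮ ⊓ (ℝ ∙ n₂)ᗮ : Submodule ℝ V) ≤
      |⟪n₁, u⟫| + |⟪n₂, u⟫| := by
  have hc := abs_real_inner_le_one h₁ h₂
  rw [← pow_le_pow_iff_left₀ (mul_nonneg (sqrt_nonneg _) infDist_nonneg) (by positivity)
    two_ne_zero, mul_pow, sq_sqrt (sub_nonneg.2 (sq_le_one_iff_abs_le_one _ |>.2 hc)),
    one_sub_inner_sq_mul_infDist_sq h₁ h₂]
  have habc := neg_abs_le (⟪n₁, u⟫ * ⟪n₂, u⟫ * ⟪n₁, n₂⟫)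
  rw [abs_mul, abs_mul] at habc
  nlinarith [mul_le_of_le_one_right (by positivity : 0 ≤ |⟪n₁, u⟫| * |⟪n₂, u⟫|) hc,
    sq_abs ⟪n₁, u⟫, sq_abs ⟪n₂, u⟫]

theorem sqrt_one_sub_inner_sq_mul_infDist_of_inner_eq_zero (h₁ : ‖n₁‖ = 1) (h₂ : ‖n₂‖ = 1)
    {u : V} (hu : ⟪n₁, u⟫ = 0) :
    √(1 - ⟪n₁, n₂⟫ ^ 2) * infDist u ((ℝ ∙ n₁)ᗮ ⊓ (ℝ ∙ n₂)ᗮ : Submodule ℝ V) = |⟪n₂, u⟫| := by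
  rw [← sq_eq_sq₀ (mul_nonneg (sqrt_nonneg _) infDist_nonneg) (abs_nonneg _), mul_pow,
    sq_sqrt (sub_nonneg.2 (sq_le_one_iff_abs_le_one _ |>.2 (abs_real_inner_le_one h₁ h₂))),
    one_sub_inner_sq_mul_infDist_sq h₁ h₂, hu, sq_abs]
  ring

theorem infDist_inf_le_of_abs_inner_le (h₁ : ‖n₁‖ = 1) (h₂ : ‖n₂‖ = 1)
    (hc : |⟪n₁, n₂⟫| < 1) {u : V} {R : ℝ} (ha : |⟪n₁, u⟫| ≤ √(1 - ⟪n₁, n₂⟫ ^ 2) * R)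
    (hb : |⟪n₂, u⟫| ≤ √(1 - ⟪n₁, n₂⟫ ^ 2) * R) :
    infDist u ((ℝ ∙ n₁)ᗮ ⊓ (ℝ ∙ n₂)ᗮ : Submodule ℝ V) ≤ 2 * R := by
  have hσ : 0 < √(1 - ⟪n₁, n₂⟫ ^ 2) :=
    sqrt_pos.2 (sub_pos.2 (sq_lt_one_iff_abs_lt_one _ |>.2 hc))
  refine le_of_mul_le_mul_left ?_ hσ
  linarith [sqrt_one_sub_inner_sq_mul_infDist_le h₁ h₂ u]

theorem sin_elevAngle_orthogonal_span_singleton (h₁ : ‖n₁‖ = 1) (h₂ : ‖n₂‖ = 1) {v : V}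
    (hv : v ∈ (ℝ ∙ n₁)ᗮ) :
    sin (elevAngle v (ℝ ∙ n₂)ᗮ) =
      √(1 - ⟪n₁, n₂⟫ ^ 2) * sin (elevAngle v ((ℝ ∙ n₁)ᗮ ⊓ (ℝ ∙ n₂)ᗮ)) := by
  rw [sin_elevAngle, sin_elevAngle, infDist_orthogonal_span_singleton_eq_abs_inner h₂,
    ← sqrt_one_sub_inner_sq_mul_infDist_of_inner_eq_zero h₁ h₂
      (mem_orthogonal_singleton_iff_inner_right.1 hv), mul_div_assoc]

theorem abs_inner_le_of_mem_cone (h₁ : ‖n₁‖ = 1) (h₂ : ‖n₂‖ = 1) {t : ℝ} (ht : 0 ≤ t)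
    {v u : V} (hv : v ∈ (ℝ ∙ n₁)ᗮ) (hu : u ∈ cone (t * elevAngle v (ℝ ∙ n₂)ᗮ) (ℝ ∙ n₂)ᗮ) :
    |⟪n₂, u⟫| ≤
      √(1 - ⟪n₁, n₂⟫ ^ 2) * (‖u‖ * t * (π / 2) * sin (elevAngle v ((ℝ ∙ n₁)ᗮ ⊓ (ℝ ∙ n₂)ᗮ))) := by
  calc |⟪n₂, u⟫| = infDist u ((ℝ ∙ n₂)ᗮ : Set V) :=
        (infDist_orthogonal_span_singleton_eq_abs_inner h₂ u).symm
    _ ≤ ‖u‖ * sin (t * elevAngle v (ℝ ∙ n₂)ᗮ) := hu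
    _ ≤ ‖u‖ * (t * (π / 2 * sin (elevAngle v (ℝ ∙ n₂)ᗮ))) := by
      gcongr
      exact sin_mul_le_mul_pi_div_two_mul_sin ht (elevAngle_nonneg _ _)
        (elevAngle_le_pi_div_two _ _)
    _ = _ := by rw [sin_elevAngle_orthogonal_span_singleton h₁ h₂ hv]; ring

end UnitNormals

end

theorem cone_intersection_subset_general {V : Type*} [NormedAddCommGroup V]
    [InnerProductSpace ℝ V] [FiniteDimensional ℝ V]
    {k : ℕ} (hk : 3 ≤ k) (hV : Module.finrank ℝ V = k)
    (V₁ V₂ : Submodule ℝ V) (hne : V₁ ≠ V₂)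
    (hV₁ : Module.finrank ℝ V₁ = k - 1) (hV₂ : Module.finrank ℝ V₂ = k - 1)
    (v₁ : V) (hv₁ : v₁ ∈ V₁)
    (v₂ : V) (hv₂ : v₂ ∈ V₂)
    (s : ℝ) (hs0 : 0 ≤ s) (hs1 : s ≤ 1) :
    cone ((2 * s / (Real.sqrt 5 * Real.pi)) * elevAngle v₁ V₂) V₂ ∩
        cone ((2 * s / (Real.sqrt 5 * Real.pi)) * elevAngle v₂ V₁) V₁ ⊆
      cone (s * max (elevAngle v₁ (V₁ ⊓ V₂)) (elevAngle v₂ (V₁ ⊓ V₂))) (V₁ ⊓ V₂) := by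
  obtain ⟨n₁, h₁, rfl⟩ := V₁.exists_norm_eq_one_eq_orthogonal_span_singleton (by
    have := V₁.finrank_add_finrank_orthogonal; omega)
  obtain ⟨n₂, h₂, rfl⟩ := V₂.exists_norm_eq_one_eq_orthogonal_span_singleton (by
    have := V₂.finrank_add_finrank_orthogonal; omega)
  set t := 2 * s / (√5 * π)
  set W := (ℝ ∙ n₁)ᗮ ⊓ (ℝ ∙ n₂)ᗮ
  set Θ := max (elevAngle v₁ W) (elevAngle v₂ W)
  have ht : 0 ≤ t := by positivity
  have hΘ : 0 ≤ Θ := le_max_of_le_left (elevAngle_nonneg _ _)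
  have hΘ' : Θ ≤ π / 2 := max_le (elevAngle_le_pi_div_two _ _) (elevAngle_le_pi_div_two _ _)
  have hsin {v : V} (h : elevAngle v W ≤ Θ) : sin (elevAngle v W) ≤ sin Θ :=
    sin_le_sin_of_le_of_le_pi_div_two (by linarith [elevAngle_nonneg W v]) hΘ' h
  rintro u ⟨hu₂, hu₁⟩
  have hb := abs_inner_le_of_mem_cone h₁ h₂ ht hv₁ hu₂
  have ha := abs_inner_le_of_mem_cone h₂ h₁ ht hv₂ hu₁
  rw [real_inner_comm n₁, inf_comm] at ha
  have hd : infDist u (W : Set V) ≤ 2 * (‖u‖ * t * (π / 2) * sin Θ) := by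
    refine infDist_inf_le_of_abs_inner_le h₁ h₂ (abs_real_inner_lt_one_of_orthogonal_ne h₁ h₂ hne)
      (ha.trans ?_) (hb.trans ?_) <;> gcongr
    exacts [hsin (le_max_right _ _), hsin (le_max_left _ _)]
  calc infDist u (W : Set V) ≤ 2 * (‖u‖ * t * (π / 2) * sin Θ) := hd
    _ = ‖u‖ * (2 * s / √5 * sin Θ) := by simp only [t]; field_simp
    _ ≤ ‖u‖ * sin (s * Θ) := by
      gcongr
      exact two_mul_div_sqrt_five_mul_sin_le_sin_mul hs0 hs1 hΘ (by linarith [pi_pos])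

theorem cone_intersection_subset {V : Type*} [NormedAddCommGroup V]
    [InnerProductSpace ℝ V] [FiniteDimensional ℝ V]
    {k : ℕ} (hk : 3 ≤ k) (hV : Module.finrank ℝ V = k)
    (V₁ V₂ : Submodule ℝ V) (hne : V₁ ≠ V₂)
    (hV₁ : Module.finrank ℝ V₁ = k - 1) (hV₂ : Module.finrank ℝ V₂ = k - 1)
    (v₁ : V) (hv₁ : v₁ ∈ V₁) (hv₁' : v₁ ∉ V₂)
    (v₂ : V) (hv₂ : v₂ ∈ V₂) (hv₂' : v₂ ∉ V₁)
    (s : ℝ) (hs0 : 0 ≤ s) (hs1 : s ≤ 1) :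
    cone ((2 * s / (Real.sqrt 5 * Real.pi)) * elevAngle v₁ V₂) V₂ ∩
        cone ((2 * s / (Real.sqrt 5 * Real.pi)) * elevAngle v₂ V₁) V₁ ⊆
      cone (s * max (elevAngle v₁ (V₁ ⊓ V₂)) (elevAngle v₂ (V₁ ⊓ V₂))) (V₁ ⊓ V₂) :=
  cone_intersection_subset_general hk hV V₁ V₂ hne hV₁ hV₂ v₁ hv₁ v₂ hv₂ s hs0 hs1
end
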